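/- Let α, β > 0, integers n ≥ 1 and 1 ≤ k ≤ n-1, and g analytic on D. The operator I_g^{n,k} f = I^n(f^{(k)} g) is bounded from B^α to B^β if and only if sup_{z∈D} (1-|z|²)^{n-k+β-α} |g(z)| < ∞. -/

import Mathlib

open Complex Metric Filter Topology

noncomputable section

def UDisk : Set ℂ := Metric.ball 0 1

def bSemi (α : ℝ) (f : ℂ → ℂ) : ℝ :=
  ⨆ z : UDisk, (1 - ‖(z : ℂ)‖ ^ 2) ^ α * ‖deriv f (z : ℂ)‖

def bNorm (α : ℝ) (f : ℂ → ℂ) : ℝ := ‖f 0‖ + bSemi α f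

def MemBloch (α : ℝ) (f : ℂ → ℂ) : Prop :=
  DifferentiableOn ℂ f UDisk ∧
    ∃ C : ℝ, ∀ z ∈ UDisk, (1 - ‖z‖ ^ 2) ^ α * ‖deriv f z‖ ≤ C

def intOp (f : ℂ → ℂ) : ℂ → ℂ := fun z => z * ∫ t in (0:ℝ)..1, f (t * z)

def Ig (g : ℂ → ℂ) (n k : ℕ) (f : ℂ → ℂ) : ℂ → ℂ :=
  intOp^[n] (fun z => iteratedDeriv k f z * g z)

def BoundedOp (α β : ℝ) (T : (ℂ → ℂ) → (ℂ → ℂ)) : Prop :=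
  ∃ C > 0, ∀ f, MemBloch α f → MemBloch β (T f) ∧ bNorm β (T f) ≤ C * bNorm α f

def CompactOp (α β : ℝ) (T : (ℂ → ℂ) → (ℂ → ℂ)) : Prop :=
  BoundedOp α β T ∧
    ∀ (F : ℕ → ℂ → ℂ) (M : ℝ), (∀ j, MemBloch α (F j)) → (∀ j, bNorm α (F j) ≤ M) →
      ∃ (φ : ℕ → ℕ) (h : ℂ → ℂ), StrictMono φ ∧ MemBloch β h ∧
        Tendsto (fun j => bNorm β (T (F (φ j)) - h)) atTop (nhds 0)

def fwi (α : ℝ) (i : ℕ) (w : ℂ) : ℂ → ℂ :=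
  fun z => z ^ i / (1 - (starRingEnd ℂ) w * z) ^ ((α : ℂ) + (i : ℂ))

open intervalIntegral



lemma mem_UDisk {z : ℂ} : z ∈ UDisk ↔ ‖z‖ < 1 := by
  simp [UDisk, mem_ball_zero_iff]

lemma oneSub_pos {z : ℂ} (hz : z ∈ UDisk) : 0 < 1 - ‖z‖ ^ 2 := by
  rw [mem_UDisk] at hz
  nlinarith [norm_nonneg z]

lemma oneSub_le_one {z : ℂ} : 1 - ‖z‖ ^ 2 ≤ 1 := by
  nlinarith [norm_nonneg z]

/-- `GrowBdd γ M u` : `|u z| ≤ M (1-|z|²)^{-γ}` on the disk. -/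
def GrowBdd (γ M : ℝ) (u : ℂ → ℂ) : Prop :=
  ∀ z ∈ UDisk, ‖u z‖ ≤ M * (1 - ‖z‖ ^ 2) ^ (-γ)

/-- Cauchy-Schwarz-type estimate: if `u` is bounded by `K` on `ball z r` then
`‖deriv u z‖ ≤ 2K/r`. -/
lemma deriv_est {u : ℂ → ℂ} {z : ℂ} {r K : ℝ} (hr : 0 < r)
    (hd : DifferentiableOn ℂ u (ball z r))
    (hb : ∀ w ∈ ball z r, ‖u w‖ ≤ K) :
    ‖deriv u z‖ ≤ 2 * K / r := by
  have hK : 0 ≤ K := le_trans (norm_nonneg _) (hb z (mem_ball_self hr))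
  have key : ∀ ε > 0, ‖deriv u z‖ ≤ (2 * K + ε) / r := by
    intro ε hε
    refine Complex.norm_deriv_le_div_of_mapsTo_ball hd ?_ hr
    intro w hw
    have h1 := hb w hw
    have h2 := hb z (mem_ball_self hr)
    rw [mem_closedBall, dist_eq_norm]
    apply le_of_lt
    calc ‖u w - u z‖ ≤ ‖u w‖ + ‖u z‖ := norm_sub_le _ _
    _ ≤ K + K := add_le_add h1 h2
    _ < 2 * K + ε := by linarith
  by_contra hcon
  push_neg at hcon
  rw [div_lt_iff₀ hr] at hcon
  have hε : 0 < (‖deriv u z‖ * r - 2 * K) / 2 := by linarith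
  have := key _ hε
  rw [le_div_iff₀ hr] at this
  linarith
lemma isOpen_UDisk : IsOpen UDisk := isOpen_ball
lemma growBdd_deriv {u : ℂ → ℂ} {γ M : ℝ} (hγ : 0 ≤ γ) (hM : 0 ≤ M)
    (hd : DifferentiableOn ℂ u UDisk) (hb : GrowBdd γ M u) :
    GrowBdd (γ + 1) (2 * 4 ^ (γ + 1) * M) (deriv u) := by
  intro z hz
  rw [mem_UDisk] at hz
  have habs := norm_nonneg z
  set a := ‖z‖ with ha
  set r : ℝ := (1 - a) / 2 with hrdef
  have hrpos : 0 < r := by rw [hrdef]; linarith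
  have hsub : ball z r ⊆ UDisk := by
    intro w hw
    rw [mem_ball, dist_eq_norm] at hw
    rw [mem_UDisk]
    calc ‖w‖ = ‖w - z + z‖ := by ring_nf
    _ ≤ ‖w - z‖ + a := norm_add_le _ _
    _ < r + a := by exact add_lt_add_left hw a
    _ < 1 := by rw [hrdef]; linarith
  have hball : ∀ w ∈ ball z r, ‖u w‖ ≤ M * r ^ (-γ) := by
    intro w hw
    have hwD := hsub hw
    have h1 : r ≤ 1 - ‖w‖ ^ 2 := by
      rw [mem_ball, dist_eq_norm] at hw
      have h2 : ‖w‖ < r + a := by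
        calc ‖w‖ = ‖w - z + z‖ := by ring_nf
        _ ≤ ‖w - z‖ + a := norm_add_le _ _
        _ < r + a := add_lt_add_left hw a
      have h3 : ‖w‖ ^ 2 ≤ ‖w‖ := by
        have : ‖w‖ ≤ 1 := le_of_lt (mem_UDisk.mp hwD)
        nlinarith [norm_nonneg w]
      rw [hrdef] at h2 ⊢
      nlinarith
    calc ‖u w‖ ≤ M * (1 - ‖w‖ ^ 2) ^ (-γ) := hb w hwD
    _ ≤ M * r ^ (-γ) := by
        apply mul_le_mul_of_nonneg_left _ hM
        exact Real.rpow_le_rpow_of_nonpos hrpos h1 (by linarith)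
  have key := deriv_est hrpos (hd.mono hsub) hball
  have hs : 0 < 1 - a ^ 2 := by nlinarith
  have h4 : (1 - a ^ 2) / 4 ≤ r := by rw [hrdef]; nlinarith
  have h5 : r ^ (-γ) / r ≤ 4 ^ (γ + 1) * (1 - a ^ 2) ^ (-(γ + 1)) := by
    have e1 : r ^ (-γ) / r = r ^ (-(γ + 1)) := by
      rw [div_eq_mul_inv, ← Real.rpow_neg_one r, ← Real.rpow_add hrpos]
      ring_nf
    rw [e1]
    have e2 : r ^ (-(γ+1)) ≤ ((1 - a ^ 2)/4) ^ (-(γ+1)) :=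
      Real.rpow_le_rpow_of_nonpos (by linarith) h4 (by linarith)
    refine e2.trans ?_
    rw [Real.div_rpow hs.le (by norm_num), Real.rpow_neg (by norm_num : (0:ℝ) ≤ 4)]
    rw [div_eq_mul_inv, inv_inv, mul_comm]
  calc ‖deriv u z‖ ≤ 2 * (M * r ^ (-γ)) / r := key
  _ = 2 * M * (r ^ (-γ) / r) := by ring
  _ ≤ 2 * M * (4 ^ (γ + 1) * (1 - a ^ 2) ^ (-(γ + 1))) := by
      apply mul_le_mul_of_nonneg_left h5 (by linarith)
  _ = 2 * 4 ^ (γ + 1) * M * (1 - a ^ 2) ^ (-(γ + 1)) := by ring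
def gc (γ : ℝ) : ℕ → ℝ
  | 0 => 1
  | j + 1 => 2 * 4 ^ (γ + j + 1) * gc γ j

lemma gc_nonneg (γ : ℝ) (j : ℕ) : 0 ≤ gc γ j := by
  induction j with
  | zero => norm_num [gc]
  | succ j ih => rw [gc]; positivity

lemma diffOn_deriv_iterate {u : ℂ → ℂ} (hd : DifferentiableOn ℂ u UDisk) (j : ℕ) :
    DifferentiableOn ℂ (deriv^[j] u) UDisk := by
  induction j with
  | zero => exact hd
  | succ j ih =>
    rw [Function.iterate_succ_apply']
    exact ((ih.analyticOnNhd isOpen_UDisk).deriv).differentiableOn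

lemma growBdd_iter {u : ℂ → ℂ} {γ M : ℝ} (hγ : 0 ≤ γ) (hM : 0 ≤ M)
    (hd : DifferentiableOn ℂ u UDisk) (hb : GrowBdd γ M u) (j : ℕ) :
    GrowBdd (γ + j) (gc γ j * M) (deriv^[j] u) := by
  induction j with
  | zero => simpa [gc] using hb
  | succ j ih =>
    have h1 := growBdd_deriv (by positivity) (mul_nonneg (gc_nonneg γ j) hM)
      (diffOn_deriv_iterate hd j) ih
    have e : γ + (j + 1 : ℕ) = (γ + j) + 1 := by push_cast; ring
    rw [e, Function.iterate_succ_apply']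
    convert h1 using 1
    rw [gc]; ring

lemma growBdd_congr {u v : ℂ → ℂ} {γ M : ℝ} (h : Set.EqOn u v UDisk)
    (hb : GrowBdd γ M u) : GrowBdd γ M v := fun z hz => (h hz) ▸ hb z hz

lemma eqOn_deriv_iterate {u v : ℂ → ℂ} (h : Set.EqOn u v UDisk) (j : ℕ) :
    Set.EqOn (deriv^[j] u) (deriv^[j] v) UDisk := by
  induction j with
  | zero => exact h
  | succ j ih =>
    intro z hz
    rw [Function.iterate_succ_apply', Function.iterate_succ_apply']
    exact (ih.eventuallyEq_of_mem (isOpen_UDisk.mem_nhds hz)).deriv_eq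
lemma hasDerivAt_intOp {u : ℂ → ℂ} (hu : DifferentiableOn ℂ u UDisk)
    {z₀ : ℂ} (hz : z₀ ∈ UDisk) : HasDerivAt (intOp u) (u z₀) z₀ := by
  have hzabs : ‖z₀‖ < 1 := mem_UDisk.mp hz
  set a := ‖z₀‖ with ha
  set r : ℝ := (a + 1) / 2 with hr
  have habs : 0 ≤ a := norm_nonneg z₀
  have hr1 : r < 1 := by rw [hr]; linarith
  have hra : a < r := by rw [hr]; linarith
  set ε : ℝ := r - a with hε
  have hεpos : 0 < ε := by rw [hε]; linarith
  have hcb : closedBall (0:ℂ) r ⊆ UDisk := by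
    intro w hw
    rw [mem_closedBall_zero_iff] at hw
    rw [mem_UDisk]
    exact lt_of_le_of_lt hw hr1
  -- continuity of u and deriv u on the disk
  have hcont : ContinuousOn u UDisk := hu.continuousOn
  have hdu : DifferentiableOn ℂ (deriv u) UDisk :=
    ((hu.analyticOnNhd isOpen_UDisk).deriv).differentiableOn
  have hcont' : ContinuousOn (deriv u) UDisk := hdu.continuousOn
  -- bounds on the closed ball
  obtain ⟨K, hK⟩ := (isCompact_closedBall (0:ℂ) r).exists_bound_of_continuousOn
    (hcont.mono hcb)
  obtain ⟨K', hK'⟩ := (isCompact_closedBall (0:ℂ) r).exists_bound_of_continuousOn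
    (hcont'.mono hcb)
  -- membership facts
  have hmap : ∀ x ∈ ball z₀ ε, ∀ t : ℝ, t ∈ Set.Icc (0:ℝ) 1 →
      (t : ℂ) * x ∈ closedBall (0:ℂ) r := by
    intro x hx t ht
    rw [mem_ball, dist_eq_norm] at hx
    rw [mem_closedBall_zero_iff]
    have hxr : ‖x‖ ≤ r := by
      calc ‖x‖ = ‖x - z₀ + z₀‖ := by ring_nf
      _ ≤ ‖x - z₀‖ + a := norm_add_le _ _
      _ ≤ ε + a := by exact add_le_add_left hx.le a
      _ = r := by rw [hε]; ring
    calc ‖(t:ℂ) * x‖ = |t| * ‖x‖ := by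
          simp [norm_mul, Complex.norm_real, Real.norm_eq_abs]
    _ ≤ 1 * r := by
        apply mul_le_mul _ hxr (norm_nonneg x) zero_le_one
        rw [abs_le]; constructor <;> linarith [ht.1, ht.2]
    _ = r := one_mul r
  have hself : z₀ ∈ ball z₀ ε := mem_ball_self hεpos
  have hIccsub : Set.uIoc (0:ℝ) 1 ⊆ Set.Icc (0:ℝ) 1 := by
    rw [Set.uIoc_of_le zero_le_one]; exact Set.Ioc_subset_Icc_self
  -- continuity of t ↦ u (t x) for x in the ball
  have hcontx : ∀ x ∈ ball z₀ ε, ContinuousOn (fun t : ℝ => u ((t:ℂ) * x)) (Set.Icc 0 1) := by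
    intro x hx
    apply (hcont.mono hcb).comp
    · exact (Continuous.continuousOn (by continuity))
    · intro t ht; exact hmap x hx t ht
  have hcontx' : ∀ x ∈ ball z₀ ε,
      ContinuousOn (fun t : ℝ => (t:ℂ) * deriv u ((t:ℂ) * x)) (Set.Icc 0 1) := by
    intro x hx
    apply ContinuousOn.mul (Continuous.continuousOn (by continuity))
    apply (hcont'.mono hcb).comp (Continuous.continuousOn (by continuity))
    intro t ht; exact hmap x hx t ht
  -- the parametric integral
  set I : ℂ → ℂ := fun x => ∫ t in (0:ℝ)..1, u ((t:ℂ) * x) with hI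
  have main := hasDerivAt_integral_of_dominated_loc_of_deriv_le (μ := MeasureTheory.volume)
    (F := fun (x : ℂ) (t : ℝ) => u ((t:ℂ) * x))
    (F' := fun (x : ℂ) (t : ℝ) => (t:ℂ) * deriv u ((t:ℂ) * x))
    (x₀ := z₀) (a := (0:ℝ)) (b := (1:ℝ)) (bound := fun _ => K') (ball_mem_nhds z₀ hεpos)
    ?_ ?_ ?_ ?_ ?_ ?_
  case refine_1 =>
    filter_upwards [ball_mem_nhds z₀ hεpos] with x hx
    exact ((hcontx x hx).mono hIccsub).aestronglyMeasurable measurableSet_uIoc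
  case refine_2 => exact (hcontx z₀ hself).intervalIntegrable_of_Icc zero_le_one
  case refine_3 =>
    exact ((hcontx' z₀ hself).mono hIccsub).aestronglyMeasurable measurableSet_uIoc
  case refine_4 =>
    apply MeasureTheory.ae_of_all
    intro t ht x hx
    have htIcc : t ∈ Set.Icc (0:ℝ) 1 := hIccsub ht
    have h1 : ‖deriv u ((t:ℂ) * x)‖ ≤ K' := hK' _ (hmap x hx t htIcc)
    calc ‖(t:ℂ) * deriv u ((t:ℂ)*x)‖ = |t| * ‖deriv u ((t:ℂ)*x)‖ := by
          simp [norm_mul, Complex.norm_real, Real.norm_eq_abs]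
    _ ≤ 1 * K' := mul_le_mul (by rw [abs_le]; constructor <;> linarith [htIcc.1, htIcc.2])
          h1 (norm_nonneg _) zero_le_one
    _ = K' := one_mul K'
  case refine_5 => exact intervalIntegrable_const
  case refine_6 =>
    apply MeasureTheory.ae_of_all
    intro t ht x hx
    have htIcc : t ∈ Set.Icc (0:ℝ) 1 := hIccsub ht
    have hmem : (t:ℂ) * x ∈ UDisk := hcb (hmap x hx t htIcc)
    have hda : HasDerivAt u (deriv u ((t:ℂ)*x)) ((t:ℂ)*x) :=
      (hu.differentiableAt (isOpen_UDisk.mem_nhds hmem)).hasDerivAt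
    have hin : HasDerivAt (fun y : ℂ => (t:ℂ) * y) (t:ℂ) x := by
      simpa using (hasDerivAt_id x).const_mul (t:ℂ)
    have hcc := HasDerivAt.comp x hda hin
    show HasDerivAt (fun x => u ((t:ℂ) * x)) ((t:ℂ) * deriv u ((t:ℂ) * x)) x
    rw [mul_comm ((t:ℂ))]; exact hcc
  obtain ⟨-, hIderiv⟩ := main
  -- product rule
  have hprod : HasDerivAt (intOp u)
      (1 * I z₀ + z₀ * ∫ t in (0:ℝ)..1, (t:ℂ) * deriv u ((t:ℂ) * z₀)) z₀ :=
    (hasDerivAt_id z₀).mul hIderiv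
  -- FTC computation
  have hmemt : ∀ t : ℝ, t ∈ Set.uIcc (0:ℝ) 1 → (t:ℂ) * z₀ ∈ UDisk := by
    intro t ht
    rw [Set.uIcc_of_le zero_le_one] at ht
    exact hcb (hmap z₀ hself t ht)
  have hFTC : ∀ t ∈ Set.uIcc (0:ℝ) 1, HasDerivAt (fun s : ℝ => (s:ℂ) * u ((s:ℂ) * z₀))
      (u ((t:ℂ)*z₀) + (t:ℂ) * (z₀ * deriv u ((t:ℂ)*z₀))) t := by
    intro t ht
    have hmem := hmemt t ht
    have h1 : HasDerivAt (fun s : ℝ => (s:ℂ)) 1 t := by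
      simpa using (hasDerivAt_id t).ofReal_comp
    have hda : HasDerivAt u (deriv u ((t:ℂ)*z₀)) ((t:ℂ)*z₀) :=
      (hu.differentiableAt (isOpen_UDisk.mem_nhds hmem)).hasDerivAt
    have hlin : HasDerivAt (fun w : ℂ => w * z₀) z₀ (t:ℂ) := by
      simpa using (hasDerivAt_id (t:ℂ)).mul_const z₀
    have hv : HasDerivAt (fun w : ℂ => u (w * z₀)) (deriv u ((t:ℂ)*z₀) * z₀) (t:ℂ) :=
      HasDerivAt.comp _ hda hlin
    have h2 : HasDerivAt (fun s : ℝ => u ((s:ℂ) * z₀)) (deriv u ((t:ℂ)*z₀) * z₀) t :=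
      hv.comp_ofReal
    have : HasDerivAt (fun s : ℝ => (s:ℂ) * u ((s:ℂ) * z₀))
        (1 * u ((t:ℂ)*z₀) + (t:ℂ) * (deriv u ((t:ℂ)*z₀) * z₀)) t := h1.mul h2
    convert this using 1
    ring
  have hint1 : IntervalIntegrable (fun t : ℝ => u ((t:ℂ)*z₀)) MeasureTheory.volume 0 1 :=
    (hcontx z₀ hself).intervalIntegrable_of_Icc zero_le_one
  have hint2' : IntervalIntegrable (fun t : ℝ => (t:ℂ) * deriv u ((t:ℂ)*z₀))
      MeasureTheory.volume 0 1 :=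
    (hcontx' z₀ hself).intervalIntegrable_of_Icc zero_le_one
  have heq : (fun t : ℝ => (t:ℂ) * (z₀ * deriv u ((t:ℂ)*z₀)))
      = fun t : ℝ => z₀ * ((t:ℂ) * deriv u ((t:ℂ)*z₀)) := by funext t; ring
  have hint2 : IntervalIntegrable (fun t : ℝ => (t:ℂ) * (z₀ * deriv u ((t:ℂ)*z₀)))
      MeasureTheory.volume 0 1 := by rw [heq]; exact hint2'.const_mul z₀
  have key := intervalIntegral.integral_eq_sub_of_hasDerivAt hFTC
    (by
      apply IntervalIntegrable.add hint1 hint2)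
  simp only [Complex.ofReal_one, Complex.ofReal_zero, one_mul, zero_mul] at key
  rw [intervalIntegral.integral_add hint1 hint2] at key
  -- massage
  have e2 : ∫ t in (0:ℝ)..1, (t:ℂ) * (z₀ * deriv u ((t:ℂ)*z₀))
      = z₀ * ∫ t in (0:ℝ)..1, (t:ℂ) * deriv u ((t:ℂ)*z₀) := by
    rw [← intervalIntegral.integral_const_mul]
    apply intervalIntegral.integral_congr
    intro t ht
    ring
  rw [e2] at key
  have : (1:ℂ) * I z₀ + z₀ * ∫ t in (0:ℝ)..1, (t:ℂ) * deriv u ((t:ℂ) * z₀) = u z₀ := by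
    rw [one_mul]
    have : I z₀ = ∫ t in (0:ℝ)..1, u ((t:ℂ)*z₀) := rfl
    rw [this]
    linear_combination key
  rw [this] at hprod
  exact hprod
lemma integral_aux {r γ : ℝ} (h0 : 0 ≤ r) (h1 : r < 1) (hγ : 1 < γ) :
    ∫ t in (0:ℝ)..1, r * (γ - 1) * (1 - t * r) ^ (-γ) = (1 - r) ^ (1 - γ) - 1 := by
  have hpos : ∀ t ∈ Set.uIcc (0:ℝ) 1, 0 < 1 - t * r := by
    intro t ht
    rw [Set.uIcc_of_le zero_le_one] at ht
    nlinarith [ht.1, ht.2]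
  have hd : ∀ t ∈ Set.uIcc (0:ℝ) 1,
      HasDerivAt (fun s : ℝ => (1 - s * r) ^ (1 - γ)) (r * (γ - 1) * (1 - t * r) ^ (-γ)) t := by
    intro t ht
    have hf : HasDerivAt (fun s : ℝ => 1 - s * r) (-r) t := by
      simpa using ((hasDerivAt_id t).mul_const r).const_sub 1
    have := hf.rpow_const (p := 1 - γ) (Or.inl (ne_of_gt (hpos t ht)))
    convert this using 1
    have : (1 : ℝ) - γ - 1 = -γ := by ring
    rw [this]; ring
  have hcont : ContinuousOn (fun t : ℝ => r * (γ - 1) * (1 - t * r) ^ (-γ))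
      (Set.uIcc (0:ℝ) 1) := by
    apply ContinuousOn.mul continuousOn_const
    apply ContinuousOn.rpow_const
    · exact (continuousOn_const.sub ((continuousOn_id).mul continuousOn_const))
    · intro t ht; exact Or.inl (ne_of_gt (hpos t ht))
  have := intervalIntegral.integral_eq_sub_of_hasDerivAt hd
    (hcont.intervalIntegrable)
  rw [this]
  norm_num

lemma growBdd_intOp {u : ℂ → ℂ} {γ M : ℝ} (hγ : 1 < γ) (hM : 0 ≤ M)
    (hu : ContinuousOn u UDisk) (hb : GrowBdd γ M u) :
    GrowBdd (γ - 1) (2 ^ (γ - 1) / (γ - 1) * M) (intOp u) := by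
  intro z hz
  have hzabs : ‖z‖ < 1 := mem_UDisk.mp hz
  set r := ‖z‖ with hr
  have h0 : 0 ≤ r := norm_nonneg z
  have hmapD : ∀ t : ℝ, t ∈ Set.Icc (0:ℝ) 1 → (t:ℂ) * z ∈ UDisk := by
    intro t ht
    rw [mem_UDisk, norm_mul, Complex.norm_real, Real.norm_eq_abs]
    calc |t| * r ≤ 1 * r := by
          apply mul_le_mul_of_nonneg_right _ h0
          rw [abs_le]; exact ⟨by linarith [ht.1], ht.2⟩
    _ = r := one_mul r
    _ < 1 := hzabs
  have habs_t : ∀ t : ℝ, t ∈ Set.Icc (0:ℝ) 1 →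
      ‖u ((t:ℂ) * z)‖ ≤ M * (1 - t * r) ^ (-γ) := by
    intro t ht
    have hmem := hmapD t ht
    have h2 := hb _ hmem
    have habs : ‖(t:ℂ) * z‖ = t * r := by
      rw [norm_mul, Complex.norm_real, Real.norm_eq_abs, _root_.abs_of_nonneg ht.1]
    rw [habs] at h2
    refine h2.trans ?_
    apply mul_le_mul_of_nonneg_left _ hM
    have htr0 : 0 ≤ t * r := mul_nonneg ht.1 h0
    have htr1 : t * r ≤ 1 := by
      calc t * r ≤ 1 * 1 := mul_le_mul ht.2 hzabs.le h0 zero_le_one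
      _ = 1 := one_mul 1
    have htrlt : t * r < 1 := by
      calc t * r ≤ 1 * r := mul_le_mul_of_nonneg_right ht.2 h0
      _ = r := one_mul r
      _ < 1 := hzabs
    apply Real.rpow_le_rpow_of_nonpos
    · linarith
    · nlinarith
    · linarith
  -- continuity of the integrand
  have hcontu : ContinuousOn (fun t : ℝ => u ((t:ℂ) * z)) (Set.Icc 0 1) := by
    apply hu.comp (Continuous.continuousOn (by continuity))
    intro t ht; exact hmapD t ht
  have hcontb : ContinuousOn (fun t : ℝ => M * (1 - t * r) ^ (-γ)) (Set.Icc (0:ℝ) 1) := by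
    apply ContinuousOn.mul continuousOn_const
    apply ContinuousOn.rpow_const
    · exact (continuousOn_const.sub ((continuousOn_id).mul continuousOn_const))
    · intro t ht; left; nlinarith [ht.1, ht.2]
  have hint1 : IntervalIntegrable (fun t : ℝ => ‖u ((t:ℂ) * z)‖)
      MeasureTheory.volume 0 1 :=
    (continuous_norm.comp_continuousOn hcontu).intervalIntegrable_of_Icc zero_le_one
  have hint2 : IntervalIntegrable (fun t : ℝ => M * (1 - t * r) ^ (-γ))
      MeasureTheory.volume 0 1 := hcontb.intervalIntegrable_of_Icc zero_le_one
  -- the main estimate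
  have hstep1 : ‖intOp u z‖ ≤ r * ∫ t in (0:ℝ)..1, ‖u ((t:ℂ) * z)‖ := by
    rw [intOp, norm_mul]
    apply mul_le_mul_of_nonneg_left _ h0
    simpa using
      intervalIntegral.norm_integral_le_integral_norm (f := fun t : ℝ => u ((t:ℂ) * z))
        (μ := MeasureTheory.volume) (a := (0:ℝ)) (b := (1:ℝ)) zero_le_one
  have hstep2 : ∫ t in (0:ℝ)..1, ‖u ((t:ℂ) * z)‖
      ≤ ∫ t in (0:ℝ)..1, M * (1 - t * r) ^ (-γ) := by
    apply intervalIntegral.integral_mono_on zero_le_one hint1 hint2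
    intro t ht; exact habs_t t ht
  have hcomp : r * ∫ t in (0:ℝ)..1, M * (1 - t * r) ^ (-γ)
      ≤ M / (γ - 1) * (1 - r) ^ (1 - γ) := by
    have e1 : r * ∫ t in (0:ℝ)..1, M * (1 - t * r) ^ (-γ)
        = (M / (γ - 1)) * ∫ t in (0:ℝ)..1, r * (γ - 1) * (1 - t * r) ^ (-γ) := by
      have hγ0 : γ - 1 ≠ 0 := by linarith
      rw [intervalIntegral.integral_const_mul, intervalIntegral.integral_const_mul]
      field_simp
    rw [e1, integral_aux h0 hzabs hγ]
    have h2 : (1 - r) ^ (1 - γ) - 1 ≤ (1 - r) ^ (1 - γ) := by linarith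
    calc M / (γ - 1) * ((1 - r) ^ (1 - γ) - 1) ≤ M / (γ - 1) * (1 - r) ^ (1 - γ) := by
          apply mul_le_mul_of_nonneg_left h2 (div_nonneg hM (by linarith))
    _ = M / (γ - 1) * (1 - r) ^ (1 - γ) := rfl
  have hfinal : (1 - r) ^ (1 - γ) ≤ 2 ^ (γ - 1) * (1 - r ^ 2) ^ (-(γ - 1)) := by
    have hs : 0 < 1 - r ^ 2 := by nlinarith
    have h3 : (1 - r ^ 2) / 2 ≤ 1 - r := by nlinarith
    have e4 : (1 : ℝ) - γ = -(γ - 1) := by ring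
    rw [e4]
    calc (1 - r) ^ (-(γ - 1)) ≤ ((1 - r ^ 2) / 2) ^ (-(γ - 1)) :=
          Real.rpow_le_rpow_of_nonpos (by positivity) h3 (by linarith)
    _ = 2 ^ (γ - 1) * (1 - r ^ 2) ^ (-(γ - 1)) := by
        rw [Real.div_rpow hs.le (by norm_num), Real.rpow_neg (by norm_num : (0:ℝ) ≤ 2)]
        rw [div_eq_mul_inv, inv_inv, mul_comm]
  calc ‖intOp u z‖ ≤ r * ∫ t in (0:ℝ)..1, ‖u ((t:ℂ) * z)‖ := hstep1
  _ ≤ r * ∫ t in (0:ℝ)..1, M * (1 - t * r) ^ (-γ) := by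
      apply mul_le_mul_of_nonneg_left hstep2 h0
  _ ≤ M / (γ - 1) * (1 - r) ^ (1 - γ) := hcomp
  _ ≤ M / (γ - 1) * (2 ^ (γ - 1) * (1 - r ^ 2) ^ (-(γ - 1))) := by
      apply mul_le_mul_of_nonneg_left hfinal (div_nonneg hM (by linarith))
  _ = 2 ^ (γ - 1) / (γ - 1) * M * (1 - r ^ 2) ^ (-(γ - 1)) := by ring
/-- coefficients of derivatives of the test functions -/
def tfc (α : ℝ) (w : ℂ) : ℕ → ℂ
  | 0 => ((1 - ‖w‖ ^ 2 : ℝ) : ℂ)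
  | m + 1 => ((α : ℂ) + m) * (starRingEnd ℂ) w * tfc α w m

/-- `m`-th derivative of the test function attached to `w` -/
def tF (α : ℝ) (w : ℂ) (m : ℕ) (z : ℂ) : ℂ :=
  tfc α w m * (1 - (starRingEnd ℂ) w * z) ^ (-(α:ℂ) - m)

lemma base_re_pos {w z : ℂ} (hw : w ∈ UDisk) (hz : z ∈ UDisk) :
    0 < (1 - (starRingEnd ℂ) w * z).re := by
  rw [mem_UDisk] at hw hz
  have h1 : ‖(starRingEnd ℂ) w * z‖ < 1 := by
    rw [norm_mul, Complex.norm_conj]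
    calc ‖w‖ * ‖z‖ ≤ 1 * ‖z‖ := by
          apply mul_le_mul_of_nonneg_right hw.le (norm_nonneg z)
    _ = ‖z‖ := one_mul _
    _ < 1 := hz
  have h2 : ((starRingEnd ℂ) w * z).re ≤ ‖(starRingEnd ℂ) w * z‖ :=
    Complex.re_le_norm _
  simp only [Complex.sub_re, Complex.one_re]
  linarith

lemma base_ne_zero {w z : ℂ} (hw : w ∈ UDisk) (hz : z ∈ UDisk) :
    1 - (starRingEnd ℂ) w * z ≠ 0 := by
  intro h
  have := base_re_pos hw hz
  rw [h] at this
  simp at this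

lemma abs_base_ge_z {w z : ℂ} (hw : w ∈ UDisk) (hz : z ∈ UDisk) :
    (1 - ‖z‖ ^ 2) / 2 ≤ ‖1 - (starRingEnd ℂ) w * z‖ := by
  rw [mem_UDisk] at hw hz
  have h1 : 1 - ‖(starRingEnd ℂ) w * z‖ ≤ ‖1 - (starRingEnd ℂ) w * z‖ := by
    have := norm_add_le (1 - (starRingEnd ℂ) w * z) ((starRingEnd ℂ) w * z)
    simp only [sub_add_cancel, norm_one] at this
    linarith
  have h2 : ‖(starRingEnd ℂ) w * z‖ ≤ ‖z‖ := by
    rw [norm_mul, Complex.norm_conj]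
    calc ‖w‖ * ‖z‖ ≤ 1 * ‖z‖ :=
          mul_le_mul_of_nonneg_right hw.le (norm_nonneg z)
    _ = ‖z‖ := one_mul _
  have h3 : (1 - ‖z‖ ^ 2) / 2 ≤ 1 - ‖z‖ := by
    nlinarith [norm_nonneg z]
  linarith

lemma abs_base_ge_w {w z : ℂ} (hw : w ∈ UDisk) (hz : z ∈ UDisk) :
    (1 - ‖w‖ ^ 2) / 2 ≤ ‖1 - (starRingEnd ℂ) w * z‖ := by
  rw [mem_UDisk] at hw hz
  have h1 : 1 - ‖(starRingEnd ℂ) w * z‖ ≤ ‖1 - (starRingEnd ℂ) w * z‖ := by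
    have := norm_add_le (1 - (starRingEnd ℂ) w * z) ((starRingEnd ℂ) w * z)
    simp only [sub_add_cancel, norm_one] at this
    linarith
  have h2 : ‖(starRingEnd ℂ) w * z‖ ≤ ‖w‖ := by
    rw [norm_mul, Complex.norm_conj]
    calc ‖w‖ * ‖z‖ ≤ ‖w‖ * 1 :=
          mul_le_mul_of_nonneg_left hz.le (norm_nonneg w)
    _ = ‖w‖ := mul_one _
  have h3 : (1 - ‖w‖ ^ 2) / 2 ≤ 1 - ‖w‖ := by
    nlinarith [norm_nonneg w]
  linarith

lemma tF_hasDerivAt {α : ℝ} {w : ℂ} (hw : w ∈ UDisk) (m : ℕ) {z : ℂ} (hz : z ∈ UDisk) :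
    HasDerivAt (tF α w m) (tF α w (m+1) z) z := by
  have hf : HasDerivAt (fun y : ℂ => 1 - (starRingEnd ℂ) w * y) (-(starRingEnd ℂ) w) z := by
    simpa using ((hasDerivAt_id z).const_mul ((starRingEnd ℂ) w)).const_sub 1
  have hslit : (1 - (starRingEnd ℂ) w * z) ∈ Complex.slitPlane :=
    Complex.mem_slitPlane_iff.mpr (Or.inl (base_re_pos hw hz))
  have hcp := (hf.cpow_const (c := -(α:ℂ) - m) hslit).const_mul (tfc α w m)
  have : HasDerivAt (tF α w m)
      (tfc α w m * ((-(α:ℂ) - m) * (1 - (starRingEnd ℂ) w * z) ^ (-(α:ℂ) - m - 1) *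
        (-(starRingEnd ℂ) w))) z := hcp
  convert this using 1
  show tfc α w (m+1) * (1 - (starRingEnd ℂ) w * z) ^ (-(α:ℂ) - (m+1:ℕ)) = _
  rw [tfc]
  have he : (-(α:ℂ) - (m+1:ℕ)) = -(α:ℂ) - m - 1 := by push_cast; ring
  rw [he]
  ring


lemma abs_tfc_eq {α : ℝ} (hα : 0 < α) {w : ℂ} (hw : w ∈ UDisk) (m : ℕ) :
    ‖tfc α w m‖
      = (1 - ‖w‖ ^ 2) * ‖w‖ ^ m * ∏ j ∈ Finset.range m, (α + j) := by
  have hq : 0 ≤ 1 - ‖w‖ ^ 2 := by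
    rw [mem_UDisk] at hw; nlinarith [norm_nonneg w]
  induction m with
  | zero =>
    simp only [tfc, Complex.norm_real, Real.norm_eq_abs, pow_zero, mul_one, Finset.range_zero,
      Finset.prod_empty]
    rw [_root_.abs_of_nonneg hq]
  | succ m ih =>
    rw [tfc, norm_mul, norm_mul, ih, Complex.norm_conj, Finset.prod_range_succ]
    have : ‖(α:ℂ) + m‖ = α + m := by
      have : ((α:ℂ) + m) = ((α + m : ℝ) : ℂ) := by push_cast; ring
      rw [this, Complex.norm_real, Real.norm_eq_abs, abs_of_pos (by positivity)]
    rw [this]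
    ring

lemma one_sub_conj_self {w : ℂ} :
    1 - (starRingEnd ℂ) w * w = ((1 - ‖w‖ ^ 2 : ℝ) : ℂ) := by
  have : (starRingEnd ℂ) w * w = ((‖w‖ ^ 2 : ℝ) : ℂ) := by
    rw [mul_comm, Complex.mul_conj, Complex.normSq_eq_norm_sq]
  rw [this]; push_cast; ring

lemma abs_cpow_exp (x : ℂ) (s : ℝ) (m : ℕ) :
    ‖x ^ (-(s:ℂ) - m)‖ = ‖x‖ ^ (-(s + m) : ℝ) := by
  have : (-(s:ℂ) - m) = ((-(s + m) : ℝ) : ℂ) := by push_cast; ring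
  rw [this, Complex.norm_cpow_real]

lemma abs_tF_at_self {α : ℝ} (hα : 0 < α) {w : ℂ} (hw : w ∈ UDisk) (m : ℕ) :
    ‖tF α w m w‖
      = ((1 - ‖w‖ ^ 2) * ‖w‖ ^ m * ∏ j ∈ Finset.range m, (α + j))
        * (1 - ‖w‖ ^ 2) ^ (-(α + m) : ℝ) := by
  have hq : 0 < 1 - ‖w‖ ^ 2 := by
    rw [mem_UDisk] at hw; nlinarith [norm_nonneg w]
  rw [tF, norm_mul, abs_tfc_eq hα hw, one_sub_conj_self, abs_cpow_exp,
    Complex.norm_real, Real.norm_eq_abs, abs_of_pos hq]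

lemma tF_one_bound {α : ℝ} (hα : 0 < α) {w z : ℂ} (hw : w ∈ UDisk) (hz : z ∈ UDisk) :
    (1 - ‖z‖ ^ 2) ^ α * ‖tF α w 1 z‖ ≤ α * 2 ^ (α + 1) := by
  set s := 1 - ‖z‖ ^ 2 with hs
  set q := 1 - ‖w‖ ^ 2 with hq
  have hspos : 0 < s := by
    have := mem_UDisk.mp hz; rw [hs]; nlinarith [norm_nonneg z]
  have hqpos : 0 < q := by
    have := mem_UDisk.mp hw; rw [hq]; nlinarith [norm_nonneg w]
  set A := ‖1 - (starRingEnd ℂ) w * z‖ with hA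
  have hAs : s / 2 ≤ A := abs_base_ge_z hw hz
  have hAq : q / 2 ≤ A := abs_base_ge_w hw hz
  have hApos : 0 < A := lt_of_lt_of_le (by linarith) hAs
  -- compute abs (tF α w 1 z)
  have habs : ‖tF α w 1 z‖ = α * ‖w‖ * q * A ^ (-(α + 1) : ℝ) := by
    rw [tF, norm_mul, abs_tfc_eq hα hw]
    have e1 := abs_cpow_exp (1 - (starRingEnd ℂ) w * z) α 1
    push_cast at e1 ⊢
    rw [e1]
    rw [Finset.prod_range_one]
    push_cast
    ring
  rw [habs]
  -- split the rpow
  have hsplit : A ^ (-(α + 1) : ℝ) ≤ (s / 2) ^ (-α) * (q / 2) ^ (-(1:ℝ)) := by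
    have e2 : A ^ (-(α + 1) : ℝ) = A ^ (-α) * A ^ (-(1:ℝ)) := by
      rw [← Real.rpow_add hApos]; ring_nf
    rw [e2]
    apply mul_le_mul
    · exact Real.rpow_le_rpow_of_nonpos (by linarith) hAs (by linarith)
    · exact Real.rpow_le_rpow_of_nonpos (by linarith) hAq (by norm_num)
    · positivity
    · positivity
  have hw1 : ‖w‖ ≤ 1 := (mem_UDisk.mp hw).le
  calc s ^ α * (α * ‖w‖ * q * A ^ (-(α + 1) : ℝ))
      ≤ s ^ α * (α * ‖w‖ * q * ((s / 2) ^ (-α) * (q / 2) ^ (-(1:ℝ)))) := by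
        apply mul_le_mul_of_nonneg_left _ (by positivity)
        apply mul_le_mul_of_nonneg_left hsplit (by positivity)
  _ = α * ‖w‖ * (s ^ α * (s / 2) ^ (-α)) * (q * (q / 2) ^ (-(1:ℝ))) := by ring
  _ = α * ‖w‖ * 2 ^ α * 2 := by
      have e3 : s ^ α * (s / 2) ^ (-α) = 2 ^ α := by
        rw [Real.rpow_neg (by positivity), Real.div_rpow hspos.le (by norm_num : (0:ℝ) ≤ 2)]
        have hsα : (0:ℝ) < s ^ α := Real.rpow_pos_of_pos hspos α
        have h2α : (0:ℝ) < (2:ℝ) ^ α := Real.rpow_pos_of_pos (by norm_num) α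
        field_simp
      have e4 : q * (q / 2) ^ (-(1:ℝ)) = 2 := by
        rw [Real.rpow_neg_one]
        field_simp
      rw [e3, e4]
  _ ≤ α * 1 * 2 ^ α * 2 := by
      apply mul_le_mul_of_nonneg_right _ (by norm_num)
      apply mul_le_mul_of_nonneg_right _ (by positivity)
      exact mul_le_mul_of_nonneg_left hw1 hα.le
  _ = α * 2 ^ (α + 1) := by
      rw [Real.rpow_add (by norm_num : (0:ℝ) < 2), Real.rpow_one]; ring

/-- iterated derivative from a chain of pointwise derivatives -/
lemma iteratedDeriv_chain {F : ℕ → ℂ → ℂ}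
    (h : ∀ m, ∀ z ∈ UDisk, HasDerivAt (F m) (F (m+1) z) z) (m : ℕ) :
    Set.EqOn (iteratedDeriv m (F 0)) (F m) UDisk := by
  induction m with
  | zero => intro z _; rw [iteratedDeriv_zero]
  | succ m ih =>
    intro z hz
    rw [iteratedDeriv_succ]
    have h1 : deriv (iteratedDeriv m (F 0)) z = deriv (F m) z :=
      (ih.eventuallyEq_of_mem (isOpen_UDisk.mem_nhds hz)).deriv_eq
    rw [h1, (h m z hz).deriv]

-- iteration lemmas for intOp
lemma diffOn_intOp {u : ℂ → ℂ} (hu : DifferentiableOn ℂ u UDisk) :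
    DifferentiableOn ℂ (intOp u) UDisk :=
  fun z hz => ((hasDerivAt_intOp hu hz).differentiableAt).differentiableWithinAt

lemma diffOn_intOp_iter {u : ℂ → ℂ} (hu : DifferentiableOn ℂ u UDisk) (m : ℕ) :
    DifferentiableOn ℂ (intOp^[m] u) UDisk := by
  induction m with
  | zero => exact hu
  | succ m ih => rw [Function.iterate_succ_apply']; exact diffOn_intOp ih

lemma eqOn_deriv_intOp_iter {u : ℂ → ℂ} (hu : DifferentiableOn ℂ u UDisk) (m : ℕ) :
    Set.EqOn (deriv (intOp^[m+1] u)) (intOp^[m] u) UDisk := by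
  intro z hz
  rw [Function.iterate_succ_apply']
  exact (hasDerivAt_intOp (diffOn_intOp_iter hu m) hz).deriv

lemma deriv_iter_intOp {u : ℂ → ℂ} (hu : DifferentiableOn ℂ u UDisk) (m : ℕ) :
    Set.EqOn (deriv^[m] (intOp^[m] u)) u UDisk := by
  induction m with
  | zero => intro z _; rfl
  | succ m ih =>
    intro z hz
    have e1 : deriv^[m+1] (intOp^[m+1] u) = deriv^[m] (deriv (intOp^[m+1] u)) :=
      Function.iterate_succ_apply deriv m _
    rw [e1]
    have e2 := eqOn_deriv_iterate (eqOn_deriv_intOp_iter hu m) m hz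
    rw [e2]
    exact ih hz

lemma intOp_zero (u : ℂ → ℂ) : intOp u 0 = 0 := by simp [intOp]

lemma intOp_iter_zero (u : ℂ → ℂ) (m : ℕ) : intOp^[m+1] u 0 = 0 := by
  rw [Function.iterate_succ_apply']; exact intOp_zero _

-- weight conversions
lemma weight_of_growBdd {γ M : ℝ} {u : ℂ → ℂ} (h : GrowBdd γ M u) :
    ∀ z ∈ UDisk, (1 - ‖z‖ ^ 2) ^ γ * ‖u z‖ ≤ M := by
  intro z hz
  have hs := oneSub_pos hz
  set s := 1 - ‖z‖ ^ 2
  have e : s ^ γ * s ^ (-γ) = 1 := by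
    rw [← Real.rpow_add hs]; simp
  calc s ^ γ * ‖u z‖ ≤ s ^ γ * (M * s ^ (-γ)) :=
        mul_le_mul_of_nonneg_left (h z hz) (Real.rpow_nonneg hs.le γ)
  _ = M * (s ^ γ * s ^ (-γ)) := by ring
  _ = M := by rw [e]; ring

lemma growBdd_of_weight {γ M : ℝ} {u : ℂ → ℂ}
    (h : ∀ z ∈ UDisk, (1 - ‖z‖ ^ 2) ^ γ * ‖u z‖ ≤ M) :
    GrowBdd γ M u := by
  intro z hz
  have hs := oneSub_pos hz
  set s := 1 - ‖z‖ ^ 2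
  have e : s ^ (-γ) * s ^ γ = 1 := by
    rw [← Real.rpow_add hs]; simp
  calc ‖u z‖ = s ^ (-γ) * s ^ γ * ‖u z‖ := by rw [e]; ring
  _ = s ^ (-γ) * (s ^ γ * ‖u z‖) := by ring
  _ ≤ s ^ (-γ) * M := mul_le_mul_of_nonneg_left (h z hz) (Real.rpow_nonneg hs.le _)
  _ = M * s ^ (-γ) := by ring

lemma growBdd_mul {γ δ M N : ℝ} {u v : ℂ → ℂ} (hM : 0 ≤ M) (hN : 0 ≤ N)
    (hu : GrowBdd γ M u) (hv : GrowBdd δ N v) :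
    GrowBdd (γ + δ) (M * N) (fun z => u z * v z) := by
  intro z hz
  have hs := oneSub_pos hz
  set s := 1 - ‖z‖ ^ 2
  have e : s ^ (-(γ + δ)) = s ^ (-γ) * s ^ (-δ) := by
    rw [← Real.rpow_add hs]; ring_nf
  rw [norm_mul, e]
  calc ‖u z‖ * ‖v z‖ ≤ (M * s ^ (-γ)) * (N * s ^ (-δ)) :=
        mul_le_mul (hu z hz) (hv z hz) (norm_nonneg _)
          (by positivity)
  _ = M * N * (s ^ (-γ) * s ^ (-δ)) := by ring

-- bSemi facts
instance : Nonempty UDisk := ⟨⟨0, by simp [UDisk]⟩⟩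

lemma zero_mem_UDisk : (0:ℂ) ∈ UDisk := by simp [UDisk]

lemma bSemi_nonneg (α : ℝ) (f : ℂ → ℂ) : 0 ≤ bSemi α f :=
  Real.iSup_nonneg (fun z => mul_nonneg (Real.rpow_nonneg (oneSub_pos z.2).le _) (norm_nonneg _))

lemma bNorm_nonneg (α : ℝ) (f : ℂ → ℂ) : 0 ≤ bNorm α f :=
  add_nonneg (norm_nonneg _) (bSemi_nonneg α f)

lemma bSemi_le {α C : ℝ} {f : ℂ → ℂ}
    (h : ∀ z ∈ UDisk, (1 - ‖z‖ ^ 2) ^ α * ‖deriv f z‖ ≤ C) :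
    bSemi α f ≤ C :=
  ciSup_le (fun z => h z z.2)

lemma memBloch_weight_le {α : ℝ} {f : ℂ → ℂ} (hf : MemBloch α f) :
    ∀ z ∈ UDisk, (1 - ‖z‖ ^ 2) ^ α * ‖deriv f z‖ ≤ bNorm α f := by
  obtain ⟨-, C, hC⟩ := hf
  intro z hz
  have hb : BddAbove (Set.range fun z : UDisk =>
      (1 - ‖(z : ℂ)‖ ^ 2) ^ α * ‖deriv f (z : ℂ)‖) := by
    refine ⟨C, ?_⟩
    rintro x ⟨w, rfl⟩
    exact hC w w.2
  have h1 : (1 - ‖z‖ ^ 2) ^ α * ‖deriv f z‖ ≤ bSemi α f :=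
    le_ciSup hb (⟨z, hz⟩ : UDisk)
  have h2 : bSemi α f ≤ bNorm α f := le_add_of_nonneg_left (norm_nonneg _)
  linarith

def ic (β : ℝ) : ℕ → ℝ
  | 0 => 1
  | j + 1 => 2 ^ (β + j) / (β + j) * ic β j

lemma ic_nonneg {β : ℝ} (hβ : 0 < β) (j : ℕ) : 0 ≤ ic β j := by
  induction j with
  | zero => norm_num [ic]
  | succ j ih =>
    rw [ic]
    apply mul_nonneg _ ih
    apply div_nonneg (Real.rpow_nonneg (by norm_num) _)
    have : (0:ℝ) ≤ j := Nat.cast_nonneg j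
    linarith

lemma growBdd_intOp_iter {β : ℝ} (hβ : 0 < β) :
    ∀ j : ℕ, ∀ u : ℂ → ℂ, ∀ M : ℝ, 0 ≤ M → DifferentiableOn ℂ u UDisk →
      GrowBdd (β + j) M u → GrowBdd β (ic β j * M) (intOp^[j] u) := by
  intro j
  induction j with
  | zero =>
    intro u M hM hu hb
    simpa [ic] using hb
  | succ j ih =>
    intro u M hM hu hb
    have hj : (0:ℝ) ≤ j := Nat.cast_nonneg j
    have hγ : 1 < β + ((j:ℕ)+1:ℕ) := by push_cast; linarith
    have h1 := growBdd_intOp hγ hM hu.continuousOn hb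
    have e : β + (((j:ℕ)+1:ℕ):ℝ) - 1 = β + j := by push_cast; ring
    rw [e] at h1
    have h2 := ih (intOp u) (2 ^ (β + j) / (β + j) * M)
      (mul_nonneg (div_nonneg (Real.rpow_nonneg (by norm_num) _) (by linarith)) hM)
      (diffOn_intOp hu) h1
    rw [Function.iterate_succ_apply]
    have e4 : ic β (j+1) * M = ic β j * (2 ^ (β + j) / (β + j) * M) := by rw [ic]; ring
    rw [e4]
    exact h2

lemma backward_dir {α β : ℝ} (hα : 0 < α) (hβ : 0 < β) {n k : ℕ} (hk : 1 ≤ k)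
    (hkn : k < n) {g : ℂ → ℂ} (hg : DifferentiableOn ℂ g UDisk) {Cg : ℝ}
    (hCg : ∀ z ∈ UDisk,
      (1 - ‖z‖ ^ 2) ^ ((n : ℝ) - k + β - α) * ‖g z‖ ≤ Cg) :
    BoundedOp α β (Ig g n k) := by
  obtain ⟨k', rfl⟩ : ∃ k', k = k' + 1 := ⟨k - 1, (Nat.succ_pred_eq_of_pos hk).symm⟩
  obtain ⟨nn, rfl⟩ : ∃ nn, n = nn + 1 :=
    ⟨n - 1, (Nat.succ_pred_eq_of_pos (by omega)).symm⟩
  have hCg0 : 0 ≤ Cg := by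
    refine le_trans ?_ (hCg 0 zero_mem_UDisk)
    exact mul_nonneg (Real.rpow_nonneg (by simp) _) (norm_nonneg _)
  have gBdd : GrowBdd (((nn+1) : ℝ) - (k'+1) + β - α) Cg g := by
    apply growBdd_of_weight
    intro z hz
    have := hCg z hz
    push_cast at this ⊢
    convert this using 3
  set Etot := ic β nn * (gc α k' * Cg) with hEtot
  have hEtot0 : 0 ≤ Etot :=
    mul_nonneg (ic_nonneg hβ nn) (mul_nonneg (gc_nonneg α k') hCg0)
  refine ⟨max Etot 1, lt_of_lt_of_le one_pos (le_max_right _ _), ?_⟩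
  intro f hf
  set M := bNorm α f with hM
  have hM0 : 0 ≤ M := bNorm_nonneg α f
  -- growth of deriv f
  have hdf : DifferentiableOn ℂ (deriv f) UDisk :=
    ((hf.1.analyticOnNhd isOpen_UDisk).deriv).differentiableOn
  have h1 : GrowBdd α M (deriv f) :=
    growBdd_of_weight (memBloch_weight_le hf)
  have h2 := growBdd_iter hα.le hM0 hdf h1 k'
  -- identify with iteratedDeriv
  have e1 : iteratedDeriv (k'+1) f = deriv^[k'] (deriv f) := by
    rw [iteratedDeriv_eq_iterate, Function.iterate_succ_apply]
  have h3 : GrowBdd (α + k') (gc α k' * M) (iteratedDeriv (k'+1) f) := by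
    rw [e1]; exact h2
  -- multiply by g
  set h := fun z => iteratedDeriv (k'+1) f z * g z with hh
  have h4 : GrowBdd ((α + k') + (((nn+1) : ℝ) - (k'+1) + β - α)) ((gc α k' * M) * Cg) h :=
    growBdd_mul (mul_nonneg (gc_nonneg α k') hM0) hCg0 h3 gBdd
  have e2 : (α + (k':ℝ)) + (((nn+1) : ℝ) - (k'+1) + β - α) = β + nn := by push_cast; ring
  rw [e2] at h4
  -- differentiability of h
  have hdh : DifferentiableOn ℂ h UDisk := by
    apply DifferentiableOn.mul _ hg
    rw [e1]
    exact diffOn_deriv_iterate hdf k'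
  -- integrate nn times
  have h5 := growBdd_intOp_iter hβ nn h ((gc α k' * M) * Cg)
    (mul_nonneg (mul_nonneg (gc_nonneg α k') hM0) hCg0) hdh h4
  have e3 : ic β nn * (gc α k' * M * Cg) = Etot * M := by rw [hEtot]; ring
  rw [e3] at h5
  -- T f and its derivative
  have hTeq : Ig g (nn+1) (k'+1) f = intOp^[nn+1] h := rfl
  have hTdiff : DifferentiableOn ℂ (Ig g (nn+1) (k'+1) f) UDisk := by
    rw [hTeq]; exact diffOn_intOp_iter hdh (nn+1)
  have hderivEq : Set.EqOn (deriv (Ig g (nn+1) (k'+1) f)) (intOp^[nn] h) UDisk := by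
    rw [hTeq]; exact eqOn_deriv_intOp_iter hdh nn
  have h6 : GrowBdd β (Etot * M) (deriv (Ig g (nn+1) (k'+1) f)) :=
    growBdd_congr hderivEq.symm h5
  have hweight := weight_of_growBdd h6
  constructor
  · exact ⟨hTdiff, ⟨Etot * M, hweight⟩⟩
  · have hzero : Ig g (nn+1) (k'+1) f 0 = 0 := by
      rw [hTeq]; exact intOp_iter_zero h nn
    have hb1 : bNorm β (Ig g (nn+1) (k'+1) f) ≤ Etot * M := by
      rw [bNorm, hzero, norm_zero]
      have := bSemi_le hweight
      linarith
    calc bNorm β (Ig g (nn+1) (k'+1) f) ≤ Etot * M := hb1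
    _ ≤ max Etot 1 * M := mul_le_mul_of_nonneg_right (le_max_left _ _) hM0

lemma diffOn_congr {u v : ℂ → ℂ} (h : Set.EqOn u v UDisk)
    (hv : DifferentiableOn ℂ v UDisk) : DifferentiableOn ℂ u UDisk := by
  intro z hz
  have he : u =ᶠ[𝓝 z] v := h.eventuallyEq_of_mem (isOpen_UDisk.mem_nhds hz)
  exact (he.differentiableAt_iff.mpr
    (hv.differentiableAt (isOpen_UDisk.mem_nhds hz))).differentiableWithinAt

lemma forward_dir {α β : ℝ} (hα : 0 < α) (hβ : 0 < β) {n k : ℕ} (hk : 1 ≤ k)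
    (hkn : k < n) {g : ℂ → ℂ} (hg : DifferentiableOn ℂ g UDisk)
    (hB : BoundedOp α β (Ig g n k)) :
    ∃ C : ℝ, ∀ z ∈ UDisk,
      (1 - ‖z‖ ^ 2) ^ ((n : ℝ) - k + β - α) * ‖g z‖ ≤ C := by
  obtain ⟨C, hC0, hC⟩ := hB
  obtain ⟨k', rfl⟩ : ∃ k', k = k' + 1 := ⟨k - 1, (Nat.succ_pred_eq_of_pos hk).symm⟩
  obtain ⟨nn, rfl⟩ : ∃ nn, n = nn + 1 :=
    ⟨n - 1, (Nat.succ_pred_eq_of_pos (by omega)).symm⟩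
  set e : ℝ := ((nn+1 : ℕ) : ℝ) - ((k'+1 : ℕ) : ℝ) + β - α with he
  set B : ℝ := 1 + α * 2 ^ (α + 1) with hBdef
  have hBpos : 0 < B := by
    rw [hBdef]; positivity
  -- small-disk bound
  have hcb : closedBall (0:ℂ) (1/2) ⊆ UDisk := by
    intro x hx
    rw [mem_closedBall_zero_iff] at hx
    rw [mem_UDisk]
    calc ‖x‖ = ‖x‖ := rfl
    _ ≤ 1/2 := hx
    _ < 1 := by norm_num
  obtain ⟨K, hK⟩ := (isCompact_closedBall (0:ℂ) (1/2)).exists_bound_of_continuousOn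
    (hg.continuousOn.mono hcb)
  set W : ℝ := max 1 ((3/4 : ℝ) ^ e) with hW
  have hWnonneg : 0 ≤ W := le_trans zero_le_one (le_max_left _ _)
  have hKnonneg : 0 ≤ K := le_trans (norm_nonneg _)
    (hK 0 (by simp [mem_closedBall_zero_iff]))
  have hsmall : ∀ z ∈ UDisk, ‖z‖ ≤ 1/2 →
      (1 - ‖z‖ ^ 2) ^ e * ‖g z‖ ≤ W * K := by
    intro z hz hzh
    have habs := norm_nonneg z
    have h34 : (3/4 : ℝ) ≤ 1 - ‖z‖ ^ 2 := by nlinarith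
    have hle1 : 1 - ‖z‖ ^ 2 ≤ 1 := by nlinarith
    have hWb : (1 - ‖z‖ ^ 2) ^ e ≤ W := by
      rcases le_or_gt 0 e with hel | hel
      · exact le_trans (Real.rpow_le_one (by linarith) hle1 hel) (le_max_left _ _)
      · exact le_trans (Real.rpow_le_rpow_of_nonpos (by norm_num) h34 hel.le)
          (le_max_right _ _)
    have hgb : ‖g z‖ ≤ K := hK z (by
      rw [mem_closedBall_zero_iff]; exact hzh)
    exact mul_le_mul hWb hgb (norm_nonneg _) hWnonneg
  -- large-disk bound via test functions
  set P : ℝ := ∏ j ∈ Finset.range (k'+1), (α + j) with hP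
  have hPpos : 0 < P := by
    apply Finset.prod_pos
    intro j _
    have : (0:ℝ) ≤ j := Nat.cast_nonneg j
    linarith
  set R : ℝ := gc β nn * (C * B) with hR
  have hRnonneg : 0 ≤ R :=
    mul_nonneg (gc_nonneg β nn) (mul_nonneg hC0.le hBpos.le)
  set Cbig : ℝ := R / ((1/2 : ℝ) ^ (k'+1) * P) with hCbig
  have hlarge : ∀ w ∈ UDisk, 1/2 < ‖w‖ →
      (1 - ‖w‖ ^ 2) ^ e * ‖g w‖ ≤ Cbig := by
    intro w hw hwh
    set fw : ℂ → ℂ := tF α w 0 with hfw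
    have hfwD : DifferentiableOn ℂ fw UDisk := fun z hz =>
      ((tF_hasDerivAt hw 0 hz).differentiableAt).differentiableWithinAt
    have hfw_weight : ∀ z ∈ UDisk,
        (1 - ‖z‖ ^ 2) ^ α * ‖deriv fw z‖ ≤ α * 2 ^ (α + 1) := by
      intro z hz
      rw [(tF_hasDerivAt hw 0 hz).deriv]
      exact tF_one_bound hα hw hz
    have hMem : MemBloch α fw := ⟨hfwD, ⟨α * 2 ^ (α + 1), hfw_weight⟩⟩
    have hq0 : 0 < 1 - ‖w‖ ^ 2 := oneSub_pos hw
    have hfw0 : ‖fw 0‖ ≤ 1 := by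
      show ‖tfc α w 0 * (1 - (starRingEnd ℂ) w * 0) ^ (-(α:ℂ) - (0:ℕ))‖ ≤ 1
      rw [mul_zero, sub_zero, Complex.one_cpow, mul_one]
      show ‖((1 - ‖w‖ ^ 2 : ℝ) : ℂ)‖ ≤ 1
      rw [Complex.norm_real, Real.norm_eq_abs, _root_.abs_of_nonneg hq0.le]
      nlinarith [norm_nonneg w]
    have hbn : bNorm α fw ≤ B := add_le_add hfw0 (bSemi_le hfw_weight)
    obtain ⟨hTB, hTle⟩ := hC fw hMem
    have hTle' : bNorm β (Ig g (nn+1) (k'+1) fw) ≤ C * B :=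
      le_trans hTle (mul_le_mul_of_nonneg_left hbn hC0.le)
    have h6 : GrowBdd β (C * B) (deriv (Ig g (nn+1) (k'+1) fw)) := by
      apply growBdd_of_weight
      intro z hz
      exact le_trans (memBloch_weight_le hTB z hz) hTle'
    set hfun : ℂ → ℂ := fun z => iteratedDeriv (k'+1) fw z * g z with hhfun
    have hiterEq : Set.EqOn (iteratedDeriv (k'+1) fw) (tF α w (k'+1)) UDisk :=
      iteratedDeriv_chain (fun m z hz => tF_hasDerivAt hw m hz) (k'+1)
    have hdh : DifferentiableOn ℂ hfun UDisk := by
      apply DifferentiableOn.mul _ hg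
      apply diffOn_congr hiterEq
      exact fun z hz => ((tF_hasDerivAt hw (k'+1) hz).differentiableAt).differentiableWithinAt
    have hTeq : Ig g (nn+1) (k'+1) fw = intOp^[nn+1] hfun := rfl
    have hEq : Set.EqOn (deriv (Ig g (nn+1) (k'+1) fw)) (intOp^[nn] hfun) UDisk := by
      rw [hTeq]; exact eqOn_deriv_intOp_iter hdh nn
    have h7 : GrowBdd β (C * B) (intOp^[nn] hfun) := growBdd_congr hEq h6
    have h8 := growBdd_iter hβ.le (mul_nonneg hC0.le hBpos.le)
      (diffOn_intOp_iter hdh nn) h7 nn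
    have h9 := h8 w hw
    rw [deriv_iter_intOp hdh nn hw] at h9
    -- compute abs (hfun w)
    have habsh : ‖hfun w‖
        = ((1 - ‖w‖ ^ 2) * ‖w‖ ^ (k'+1) * P)
          * (1 - ‖w‖ ^ 2) ^ (-(α + (k'+1 : ℕ)) : ℝ) * ‖g w‖ := by
      show ‖iteratedDeriv (k'+1) fw w * g w‖ = _
      rw [norm_mul, hiterEq hw, abs_tF_at_self hα hw]
    rw [habsh] at h9
    -- rearrange
    set q := 1 - ‖w‖ ^ 2 with hqdef
    set X := ‖g w‖ with hX
    set c := ‖w‖ ^ (k'+1) with hc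
    have hXnn : 0 ≤ X := norm_nonneg _
    have hcpos : 0 < c := by
      apply pow_pos; linarith
    have A2 : q * c * P * q ^ (-(α + (k'+1 : ℕ)) : ℝ) * X * q ^ (β + (nn:ℝ)) ≤ R := by
      have hmr := mul_le_mul_of_nonneg_right h9 (Real.rpow_nonneg hq0.le (β + (nn:ℝ)))
      have ee : q ^ (-(β + (nn:ℝ))) * q ^ (β + (nn:ℝ)) = 1 := by
        have h0 : -(β + (nn:ℝ)) + (β + (nn:ℝ)) = 0 := by ring
        rw [← Real.rpow_add hq0, h0, Real.rpow_zero]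
      have e5 : gc β nn * (C * B) * q ^ (-(β + (nn:ℝ))) * q ^ (β + (nn:ℝ)) = R := by
        rw [mul_assoc, ee, mul_one, hR]
      exact le_trans hmr (le_of_eq e5)
    have eqq : q * q ^ (-(α + (k'+1 : ℕ)) : ℝ) * q ^ (β + (nn:ℝ)) = q ^ e := by
      nth_rewrite 1 [← Real.rpow_one q]
      rw [← Real.rpow_add hq0, ← Real.rpow_add hq0]
      congr 1
      rw [he]; push_cast; ring
    have A3 : c * P * (q ^ e * X) ≤ R := by
      have lhs_eq : q * c * P * q ^ (-(α + (k'+1 : ℕ)) : ℝ) * X * q ^ (β + (nn:ℝ))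
          = c * P * (q ^ e * X) := by rw [← eqq]; ring
      linarith [A2, lhs_eq.symm.le]
    have hcP : 0 < c * P := mul_pos hcpos hPpos
    have A4 : q ^ e * X ≤ R / (c * P) := by
      rw [le_div_iff₀ hcP]
      calc q ^ e * X * (c * P) = c * P * (q ^ e * X) := by ring
      _ ≤ R := A3
    refine le_trans A4 ?_
    rw [hCbig]
    apply div_le_div_of_nonneg_left hRnonneg
    · positivity
    · apply mul_le_mul_of_nonneg_right _ hPpos.le
      apply pow_le_pow_left₀ (by norm_num) hwh.le
  -- combine
  refine ⟨max (W * K) Cbig, ?_⟩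
  intro z hz
  rcases le_or_gt (‖z‖) (1/2) with hcase | hcase
  · exact le_trans (hsmall z hz hcase) (le_max_left _ _)
  · exact le_trans (hlarge z hz hcase) (le_max_right _ _)


theorem stmt8 (α β : ℝ) (hα : 0 < α) (hβ : 0 < β) (n k : ℕ) (hk : 1 ≤ k)
    (hkn : k < n) (g : ℂ → ℂ) (hg : DifferentiableOn ℂ g UDisk) :
    BoundedOp α β (Ig g n k) ↔
      ∃ C : ℝ, ∀ z ∈ UDisk,
        (1 - ‖z‖ ^ 2) ^ ((n : ℝ) - k + β - α) * ‖g z‖ ≤ C := by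
  constructor
  · intro hB
    exact forward_dir hα hβ hk hkn hg hB
  · rintro ⟨C, hC⟩
    exact backward_dir hα hβ hk hkn hg hC
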